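/- arXiv:2307.01415 — 3 statements merged into one kernel-verified Lean document; each statement's English description precedes it below -/
import Mathlib

section
/- Let C, D : ℝ → ℝ → ℝ be functions satisfying, for all real n ≥ 1 and k ≥ 1: (Rule 1) C(n,k) ≤ D(n,k) + n; (Rule 2) for every real x with 1 ≤ x ≤ k, D(n,k) ≤ C(n,x) + D(k/x, k); (Rule 3) D(n,k) ≤ D(√k, k); (Rule 4) C(n,k) ≤ n·log₂k and D(n,k) ≤ n·log₂k. Then for every integer j ≥ 2 and all reals n ≥ 1, k ≥ 1, if n ≥ ((j+1)/2)·k^(1/j)·log₂k, then C(n,k) ≤ j·n. -/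
/-! Induction on `i ≥ 2` proves the bound `D(m, K) ≤ (i - 2) m + ((i + 1)/2 - 1/i) K^(1/i) log₂ K`
for all `m, K ≥ 1`. Rules 3 and 4 give the case `i = 2`. For the step, Rule 2 splits `K` at
`x = K^(i/(i+1))`; Rule 1 turns `C(m, x)` into `D(m, x) + m`, which the induction hypothesis bounds,
and Rule 4 bounds `D(K/x, K)` by `K^(1/(i+1)) log₂ K`. Rule 1 once more gives
`C(n, k) ≤ (j - 1) n + ((j + 1)/2) k^(1/j) log₂ k ≤ j n`. -/

open Real

lemma rpow_rpow_mul_logb_rpow {K : ℝ} (hK : 0 < K) (b p q : ℝ) :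
    (K ^ p) ^ q * logb b (K ^ p) = p * (K ^ (p * q) * logb b K) := by
  rw [← rpow_mul hK.le, logb_rpow_eq_mul_logb_of_pos hK]
  ring

lemma D_le_sub_two_mul_add_rpow_mul_logb (C D : ℝ → ℝ → ℝ)
    (rule1 : ∀ n k : ℝ, 1 ≤ n → 1 ≤ k → C n k ≤ D n k + n)
    (rule2 : ∀ n k x : ℝ, 1 ≤ n → 1 ≤ k → 1 ≤ x → x ≤ k → D n k ≤ C n x + D (k / x) k)
    (rule3 : ∀ n k : ℝ, 1 ≤ n → 1 ≤ k → D n k ≤ D (√k) k)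
    (rule4 : ∀ n k : ℝ, 1 ≤ n → 1 ≤ k → D n k ≤ n * logb 2 k)
    (i : ℕ) (hi : 2 ≤ i) {m K : ℝ} (hm : 1 ≤ m) (hK : 1 ≤ K) :
    D m K ≤ (i - 2) * m + ((i + 1) / 2 - 1 / i) * (K ^ (1 / (i : ℝ)) * logb 2 K) := by
  induction i, hi using Nat.le_induction generalizing K with
  | base =>
    have hsqrt : √K = K ^ (1 / ((2 : ℕ) : ℝ)) := by rw [sqrt_eq_rpow]; norm_num
    calc D m K ≤ D (√K) K := rule3 m K hm hK
      _ ≤ √K * logb 2 K := rule4 _ K (one_le_sqrt.mpr hK) hK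
      _ = _ := by rw [hsqrt]; norm_num
  | succ i hi ih =>
    have hi0 : (0 : ℝ) < i := by positivity
    have hK0 : 0 < K := by linarith
    set x := K ^ ((i : ℝ) / (i + 1))
    have hx1 : 1 ≤ x := one_le_rpow hK (by positivity)
    have hxK : x ≤ K := rpow_le_self_of_one_le hK (by rw [div_le_one (by positivity)]; linarith)
    have hKx : K / x = K ^ (1 / ((i : ℝ) + 1)) := by
      rw [show 1 / ((i : ℝ) + 1) = 1 - i / (i + 1) by field_simp; ring, rpow_sub hK0, rpow_one]
    have hlog_x : x ^ (1 / (i : ℝ)) * logb 2 x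
        = i / (i + 1) * (K ^ (1 / ((i : ℝ) + 1)) * logb 2 K) := by
      rw [rpow_rpow_mul_logb_rpow hK0]
      congr 3
      field_simp
    calc D m K ≤ C m x + D (K / x) K := rule2 m K x hm hK hx1 hxK
      _ ≤ (D m x + m) + K ^ (1 / ((i : ℝ) + 1)) * logb 2 K := by
        gcongr
        · exact rule1 m x hm hx1
        · rw [hKx]; exact rule4 _ K (one_le_rpow hK (by positivity)) hK
      _ ≤ ((i - 2) * m + ((i + 1) / 2 - 1 / i) * (x ^ (1 / (i : ℝ)) * logb 2 x) + m)
          + K ^ (1 / ((i : ℝ) + 1)) * logb 2 K := by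
        gcongr
        exact ih hx1
      _ = _ := by
        rw [hlog_x]
        push_cast
        field_simp
        ring

/-- Paper's Theorem 1 (abstract form): if `C` and `D` satisfy Rules 1–4, then for every
integer `j ≥ 2`, whenever `n ≥ ((j+1)/2) * k^(1/j) * log₂ k`, we have `C n k ≤ j * n`. -/
theorem stmt_0 (C D : ℝ → ℝ → ℝ)
    (rule1 : ∀ n k : ℝ, 1 ≤ n → 1 ≤ k → C n k ≤ D n k + n)
    (rule2 : ∀ n k x : ℝ, 1 ≤ n → 1 ≤ k → 1 ≤ x → x ≤ k → D n k ≤ C n x + D (k / x) k)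
    (rule3 : ∀ n k : ℝ, 1 ≤ n → 1 ≤ k → D n k ≤ D (Real.sqrt k) k)
    (rule4 : ∀ n k : ℝ, 1 ≤ n → 1 ≤ k →
      C n k ≤ n * Real.logb 2 k ∧ D n k ≤ n * Real.logb 2 k) :
    ∀ j : ℤ, 2 ≤ j → ∀ n k : ℝ, 1 ≤ n → 1 ≤ k →
      n ≥ (((j : ℝ) + 1) / 2) * k ^ ((1 : ℝ) / (j : ℝ)) * Real.logb 2 k →
      C n k ≤ (j : ℝ) * n := by
  intro j hj n k hn hk hnk
  lift j to ℕ using by omega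
  push_cast at hnk ⊢
  have hD := D_le_sub_two_mul_add_rpow_mul_logb C D rule1 rule2 rule3
    (fun n k hn hk => (rule4 n k hn hk).2) j (by exact_mod_cast hj) hn hk
  have hE : 0 ≤ 1 / (j : ℝ) * (k ^ (1 / (j : ℝ)) * logb 2 k) := by
    have : 0 ≤ logb 2 k := logb_nonneg one_lt_two hk
    positivity
  calc C n k ≤ D n k + n := rule1 n k hn hk
    _ ≤ j * n := by linarith
end

section
/- Let C, D : ℝ → ℝ → ℝ be functions satisfying, for all real n ≥ 1 and k ≥ 1: (Rule 1) C(n,k) ≤ D(n,k) + n; (Rule 2) for every real x with 1 ≤ x ≤ k, D(n,k) ≤ C(n,x) + D(k/x, k); (Rule 3) D(n,k) ≤ D(√k, k); (Rule 4) C(n,k) ≤ n·log₂k and D(n,k) ≤ n·log₂k. Then for every integer i ≥ 0 and all reals n ≥ 1, k ≥ 1, C(n,k) ≤ ((i+3)/2)·k^(1/(i+2))·log₂k + (i+1)·n. -/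
/-- Penultimate inequality in the proof of the paper's Theorem 1: under Rules 1–4,
`C n k ≤ ((i+3)/2) * k^(1/(i+2)) * log₂ k + (i+1) * n` for every integer `i ≥ 0`. -/
theorem stmt_1 (C D : ℝ → ℝ → ℝ)
    (rule1 : ∀ n k : ℝ, 1 ≤ n → 1 ≤ k → C n k ≤ D n k + n)
    (rule2 : ∀ n k x : ℝ, 1 ≤ n → 1 ≤ k → 1 ≤ x → x ≤ k → D n k ≤ C n x + D (k / x) k)
    (rule3 : ∀ n k : ℝ, 1 ≤ n → 1 ≤ k → D n k ≤ D (Real.sqrt k) k)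
    (rule4 : ∀ n k : ℝ, 1 ≤ n → 1 ≤ k →
      C n k ≤ n * Real.logb 2 k ∧ D n k ≤ n * Real.logb 2 k) :
    ∀ i : ℕ, ∀ n k : ℝ, 1 ≤ n → 1 ≤ k →
      C n k ≤ (((i : ℝ) + 3) / 2) * k ^ ((1 : ℝ) / ((i : ℝ) + 2)) * Real.logb 2 k
        + ((i : ℝ) + 1) * n := by
  intro i
  induction i with
  | zero =>
    intro n k hn hk
    have hk0 : (0:ℝ) < k := lt_of_lt_of_le one_pos hk
    have hsq : 1 ≤ Real.sqrt k := by
      rw [show (1:ℝ) = Real.sqrt 1 by simp]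
      exact Real.sqrt_le_sqrt hk
    have h1 := rule1 n k hn hk
    have h3 := rule3 n k hn hk
    have h4 := (rule4 (Real.sqrt k) k hsq hk).2
    have hlog : 0 ≤ Real.logb 2 k := Real.logb_nonneg one_lt_two hk
    have hpos : 0 ≤ Real.sqrt k := Real.sqrt_nonneg k
    have hre : k ^ ((1:ℝ) / (((0:ℕ):ℝ) + 2)) = Real.sqrt k := by
      rw [Real.sqrt_eq_rpow]; norm_num
    rw [hre]
    push_cast
    nlinarith
  | succ i ih =>
    intro n k hn hk
    have hk0 : (0:ℝ) < k := lt_of_lt_of_le one_pos hk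
    have hi3 : (0:ℝ) < (i:ℝ) + 3 := by positivity
    have hi2 : (0:ℝ) < (i:ℝ) + 2 := by positivity
    set a : ℝ := ((i:ℝ)+2)/((i:ℝ)+3) with ha
    have ha0 : 0 ≤ a := by positivity
    have ha1 : a ≤ 1 := by rw [ha, div_le_one hi3]; linarith
    set x : ℝ := k ^ a with hx
    have hx1 : 1 ≤ x := Real.one_le_rpow hk ha0
    have hxk : x ≤ k := by
      calc x = k ^ a := rfl
        _ ≤ k ^ (1:ℝ) := Real.rpow_le_rpow_of_exponent_le hk ha1
        _ = k := Real.rpow_one k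
    have hdiv : k / x = k ^ ((1:ℝ)/((i:ℝ)+3)) := by
      have h' : k / x = k ^ ((1:ℝ) - a) := by
        rw [Real.rpow_sub hk0, Real.rpow_one, hx]
      rw [h']
      congr 1
      rw [ha]
      field_simp
      norm_num
    have hdiv1 : 1 ≤ k / x := by
      rw [hdiv]; exact Real.one_le_rpow hk (by positivity)
    have hxe : x ^ ((1:ℝ)/((i:ℝ)+2)) = k ^ ((1:ℝ)/((i:ℝ)+3)) := by
      rw [hx, ← Real.rpow_mul hk0.le]
      congr 1
      rw [ha]
      field_simp
    have hlogx : Real.logb 2 x = a * Real.logb 2 k := by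
      rw [hx, Real.logb, Real.logb, Real.log_rpow hk0]
      ring
    have h1 := rule1 n k hn hk
    have h2 := rule2 n k x hn hk hx1 hxk
    have h4 := (rule4 (k/x) k hdiv1 hk).2
    have ihC := ih n x hn hx1
    rw [hxe, hlogx] at ihC
    rw [hdiv] at h4 h2
    have hlog : 0 ≤ Real.logb 2 k := Real.logb_nonneg one_lt_two hk
    have hr : 0 ≤ k ^ ((1:ℝ)/((i:ℝ)+3)) := Real.rpow_nonneg hk0.le _
    have hexp : (1:ℝ) / ((↑(i+1):ℝ) + 2) = (1:ℝ)/((i:ℝ)+3) := by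
      push_cast; ring_nf
    rw [hexp]
    push_cast
    set L := Real.logb 2 k
    set r := k ^ ((1:ℝ)/((i:ℝ)+3))
    have key : ((i:ℝ)+3)/2 * r * (a * L) + r * L = ((i:ℝ)+1+3)/2 * r * L := by
      rw [ha]
      field_simp
      ring
    linarith
end

section
/- Let C, D : ℝ → ℝ → ℝ be functions satisfying, for all real n ≥ 1 and k ≥ 1: (Rule 1) C(n,k) ≤ D(n,k) + n, and (Rule 2) for every real x with 1 ≤ x ≤ k, D(n,k) ≤ C(n,x) + D(k/x, k). Then for every integer i ≥ 0, every real n ≥ 1, and every nonincreasing sequence of reals x₀ ≥ x₁ ≥ ⋯ ≥ xᵢ ≥ 1, one has C(n, x₀) ≤ D(n, xᵢ) + Σ_{j=0}^{i−1} D(xⱼ/x_{j+1}, xⱼ) + (i+1)·n. -/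
/-!
Rule 2 at an intermediate point `x`, followed by Rule 1 at `x`, gives
`D n k ≤ D n x + D (k / x) k + n`; this telescopes along the chain `x₀ ≥ ⋯ ≥ xᵢ`,
and one more application of Rule 1 at `x₀` turns `D n x₀` into `C n x₀`.
-/

open Finset

theorem le_apply_zero_of_succ_le {α : Type*} [Preorder α] {x : ℕ → α} :
    ∀ {i : ℕ}, (∀ j < i, x (j + 1) ≤ x j) → x i ≤ x 0
  | 0, _ => le_rfl
  | i + 1, hx => (hx i i.lt_succ_self).trans
      (le_apply_zero_of_succ_le fun j hj => hx j (hj.trans i.lt_succ_self))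

theorem le_add_sum_add_mul_of_le_add {f : ℝ → ℝ} {g : ℝ → ℝ → ℝ} {c : ℝ}
    (step : ∀ k y, 1 ≤ y → y ≤ k → f k ≤ f y + g k y + c) {x : ℕ → ℝ} :
    ∀ {i : ℕ}, (∀ j < i, x (j + 1) ≤ x j) → 1 ≤ x i →
      f (x 0) ≤ f (x i) + ∑ j ∈ range i, g (x j) (x (j + 1)) + i * c
  | 0, _, _ => by simp
  | i + 1, hx, hxi => by
    have hxi_succ := hx i i.lt_succ_self
    have ih := le_add_sum_add_mul_of_le_add step
      (fun j hj => hx j (hj.trans i.lt_succ_self)) (hxi.trans hxi_succ)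
    rw [sum_range_succ]
    push_cast
    linarith [step _ _ hxi hxi_succ]

theorem le_add_div_add_of_rules {C D : ℝ → ℝ → ℝ}
    (rule1 : ∀ n k : ℝ, 1 ≤ n → 1 ≤ k → C n k ≤ D n k + n)
    (rule2 : ∀ n k x : ℝ, 1 ≤ n → 1 ≤ k → 1 ≤ x → x ≤ k → D n k ≤ C n x + D (k / x) k)
    {n : ℝ} (hn : 1 ≤ n) (k x : ℝ) (hx : 1 ≤ x) (hxk : x ≤ k) :
    D n k ≤ D n x + D (k / x) k + n := by
  linarith [rule2 n k x hn (hx.trans hxk) hx hxk, rule1 n x hn hx]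

/-- Unrolled recursion inequality from the proof of the paper's Theorem 1: under
Rules 1 and 2 alone, for any nonincreasing sequence `x₀ ≥ x₁ ≥ ⋯ ≥ xᵢ ≥ 1`,
`C n x₀ ≤ D n xᵢ + Σ_{j=0}^{i−1} D (xⱼ/x_{j+1}) xⱼ + (i+1)·n`. -/
theorem stmt_2 (C D : ℝ → ℝ → ℝ)
    (rule1 : ∀ n k : ℝ, 1 ≤ n → 1 ≤ k → C n k ≤ D n k + n)
    (rule2 : ∀ n k x : ℝ, 1 ≤ n → 1 ≤ k → 1 ≤ x → x ≤ k → D n k ≤ C n x + D (k / x) k) :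
    ∀ i : ℕ, ∀ n : ℝ, 1 ≤ n → ∀ x : ℕ → ℝ,
      (∀ j, j < i → x (j + 1) ≤ x j) → 1 ≤ x i →
      C n (x 0) ≤ D n (x i) + (∑ j ∈ Finset.range i, D (x j / x (j + 1)) (x j))
        + ((i : ℝ) + 1) * n := by
  intro i n hn x hx hxi
  have htelescope := le_add_sum_add_mul_of_le_add (f := D n) (g := fun k y => D (k / y) k)
    (le_add_div_add_of_rules rule1 rule2 hn) hx hxi
  linarith [rule1 n (x 0) hn (hxi.trans (le_apply_zero_of_succ_le hx))]
end
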